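/- In a modular lattice, suppose d ≤ a ≤ x ≤ b ≤ c, and suppose y is a local (d,c)-complement of x, i.e. d ≤ y ≤ c, x ⊓ y = d, and x ⊔ y = c. Then the element y' := a ⊔ (y ⊓ b) lies in the interval [a,b] and is a local (a,b)-complement of x, i.e. x ⊓ y' = a and x ⊔ y' = b. (If an interval of a modular lattice has local complements, then all its subintervals also have them, and the subinterval complement is obtained by the formula x^a_b = a ⊔ (x^d_c ⊓ b).) -/

import Mathlib

/-!
Both identities are one application of the modular law each: since `a ≤ x`,
`x ⊓ (a ⊔ (y ⊓ b)) = a ⊔ (x ⊓ y ⊓ b)`, and the second term lies below `x ⊓ y = d ≤ a`;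
since `x ≤ b`, `x ⊔ (y ⊓ b) = (x ⊔ y) ⊓ b = c ⊓ b = b`.
-/

section

variable {L : Type*} [Lattice L] [IsModularLattice L] {a b x y : L}

theorem inf_sup_inf_eq_of_le_of_inf_le (hax : a ≤ x) (hxy : x ⊓ y ≤ a) :
    x ⊓ (a ⊔ y ⊓ b) = a := by
  rw [inf_comm, sup_inf_assoc_of_le _ hax, inf_right_comm, inf_comm y x]
  exact sup_eq_left.mpr (inf_le_left.trans hxy)

theorem sup_sup_inf_eq_of_le_of_le_sup (hax : a ≤ x) (hxb : x ≤ b) (hbxy : b ≤ x ⊔ y) :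
    x ⊔ (a ⊔ y ⊓ b) = b := by
  rw [← sup_assoc, sup_eq_left.mpr hax, ← sup_inf_assoc_of_le _ hxb]
  exact inf_eq_right.mpr hbxy

end

theorem subinterval_local_complement_modular_general {L : Type*} [Lattice L] [IsModularLattice L]
    (d a x b c y : L)
    (hda : d ≤ a) (hax : a ≤ x) (hxb : x ≤ b) (hbc : b ≤ c)
    (hinf : x ⊓ y = d) (hsup : x ⊔ y = c) :
    a ≤ a ⊔ (y ⊓ b) ∧ a ⊔ (y ⊓ b) ≤ b ∧
      x ⊓ (a ⊔ (y ⊓ b)) = a ∧ x ⊔ (a ⊔ (y ⊓ b)) = b :=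
  ⟨le_sup_left, sup_le (hax.trans hxb) inf_le_right,
    inf_sup_inf_eq_of_le_of_inf_le hax (hinf ▸ hda),
    sup_sup_inf_eq_of_le_of_le_sup hax hxb (hsup ▸ hbc)⟩

theorem subinterval_local_complement_modular {L : Type*} [Lattice L] [IsModularLattice L]
    (d a x b c y : L)
    (hda : d ≤ a) (hax : a ≤ x) (hxb : x ≤ b) (hbc : b ≤ c)
    (hdy : d ≤ y) (hyc : y ≤ c)
    (hinf : x ⊓ y = d) (hsup : x ⊔ y = c) :
    a ≤ a ⊔ (y ⊓ b) ∧ a ⊔ (y ⊓ b) ≤ b ∧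
      x ⊓ (a ⊔ (y ⊓ b)) = a ∧ x ⊔ (a ⊔ (y ⊓ b)) = b :=
  subinterval_local_complement_modular_general d a x b c y hda hax hxb hbc hinf hsup
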